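/- Let S be a bounded linear operator on a complex Hilbert space H such that Re S is a positive operator, or Im S is a positive operator. Then ‖S‖² − ‖S²‖ ≤ 2·‖Re S‖·‖Im S‖. -/

import Mathlib

/-- `|S| = (S* S)^{1/2}`, via the continuous functional calculus. -/
noncomputable def absOp {H : Type*} [NormedAddCommGroup H] [InnerProductSpace ℂ H]
    [CompleteSpace H] (S : H →L[ℂ] H) : H →L[ℂ] H :=
  CFC.sqrt (ContinuousLinearMap.adjoint S * S)

/-- `Re S = (S + S*)/2`. -/
noncomputable def reOp {H : Type*} [NormedAddCommGroup H] [InnerProductSpace ℂ H]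
    [CompleteSpace H] (S : H →L[ℂ] H) : H →L[ℂ] H :=
  (2⁻¹ : ℂ) • (S + ContinuousLinearMap.adjoint S)

/-- `Im S = (S - S*)/(2i)`. -/
noncomputable def imOp {H : Type*} [NormedAddCommGroup H] [InnerProductSpace ℂ H]
    [CompleteSpace H] (S : H →L[ℂ] H) : H →L[ℂ] H :=
  (2 * Complex.I)⁻¹ • (S - ContinuousLinearMap.adjoint S)

/-- Numerical radius `ω(S) = sup {|⟨Sx,x⟩| : ‖x‖ = 1}`. -/
noncomputable def numRadius {H : Type*} [NormedAddCommGroup H] [InnerProductSpace ℂ H]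
    [CompleteSpace H] (S : H →L[ℂ] H) : ℝ :=
  ⨆ x : {x : H // ‖x‖ = 1}, ‖(inner ℂ (S x) (x : H) : ℂ)‖

/-- Spectral radius, as a real number. -/
noncomputable def specRad {H : Type*} [NormedAddCommGroup H] [InnerProductSpace ℂ H]
    [CompleteSpace H] (S : H →L[ℂ] H) : ℝ :=
  (spectralRadius ℂ S).toReal

/-!
Write `S = A + iB` with `A = Re S`, `B = Im S`; then `S*S - SS* = 2i(AB - BA)`. Expanding
`(S*S)² = (S²)*S² - S*(S*S - SS*)S` and using the C*-identity gives
`‖S‖⁴ ≤ ‖S²‖² + ‖S‖² ‖S*S - SS*‖`, hence `‖S‖² - ‖S²‖ ≤ ‖S*S - SS*‖ = 2‖AB - BA‖`.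
Finally, if `A ≥ 0` (the case `B ≥ 0` is symmetric) its spectrum lies in `[0, ‖A‖]`, so
`A - ‖A‖/2` has norm at most `‖A‖/2`; it has the same commutator with `B` as `A`, whence
`‖AB - BA‖ ≤ ‖A‖ ‖B‖`.
-/

section CStarRing

variable {A : Type*} [NormedRing A] [StarRing A] [CStarRing A]

theorem CStarRing.norm_sq_sub_norm_pow_two_le_norm_star_mul_self_sub_self_mul_star (a : A) :
    ‖a‖ ^ 2 - ‖a ^ 2‖ ≤ ‖star a * a - a * star a‖ := by
  set K := ‖star a * a - a * star a‖
  have hquartic : (‖a‖ ^ 2) ^ 2 ≤ ‖a ^ 2‖ ^ 2 + ‖a‖ ^ 2 * K := by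
    have hsq : star a * a * (star a * a)
        = star (a ^ 2) * a ^ 2 - star a * (star a * a - a * star a) * a := by
      simp only [pow_two, star_mul, mul_sub, sub_mul, mul_assoc]
      abel
    have hself : ‖star a * a * (star a * a)‖ = (‖a‖ ^ 2) ^ 2 := by
      have h := CStarRing.norm_star_mul_self (x := star a * a)
      rw [star_mul, star_star, CStarRing.norm_star_mul_self] at h
      rw [h]; ring
    calc (‖a‖ ^ 2) ^ 2 = ‖star (a ^ 2) * a ^ 2 - star a * (star a * a - a * star a) * a‖ := by
          rw [← hself, hsq]
      _ ≤ ‖star (a ^ 2) * a ^ 2‖ + ‖star a * (star a * a - a * star a) * a‖ := norm_sub_le _ _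
      _ ≤ ‖a ^ 2‖ ^ 2 + ‖a‖ ^ 2 * K := by
          gcongr
          · exact (CStarRing.norm_star_mul_self.trans (sq _).symm).le
          · calc _ ≤ ‖star a‖ * K * ‖a‖ := norm_mul₃_le
              _ = ‖a‖ ^ 2 * K := by rw [norm_star]; ring
  nlinarith [norm_nonneg (a ^ 2), norm_nonneg (star a * a - a * star a), sq_nonneg ‖a‖]

end CStarRing

section CStarAlgebra

variable {A : Type*} [CStarAlgebra A] [PartialOrder A] [StarOrderedRing A]

theorem CStarAlgebra.norm_sub_algebraMap_half_norm_le {a : A} (ha : 0 ≤ a) :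
    ‖a - algebraMap ℝ A (‖a‖ / 2)‖ ≤ ‖a‖ / 2 := by
  nontriviality A
  have hcfc : a - algebraMap ℝ A (‖a‖ / 2) = cfc (fun t : ℝ => t - ‖a‖ / 2) a := by
    rw [cfc_sub _ _, cfc_id' ℝ a, cfc_const _ _]
  rw [hcfc]
  refine norm_cfc_le (by positivity) fun t ht => ?_
  have h0 : 0 ≤ t := spectrum_nonneg_of_nonneg ha ht
  have h1 : t ≤ ‖a‖ := (Real.le_norm_self t).trans (spectrum.norm_le_norm_of_mem ht)
  rw [Real.norm_eq_abs, abs_le]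
  constructor <;> linarith

theorem CStarAlgebra.norm_mul_sub_mul_le_of_nonneg {a : A} (ha : 0 ≤ a) (b : A) :
    ‖a * b - b * a‖ ≤ ‖a‖ * ‖b‖ := by
  set d := a - algebraMap ℝ A (‖a‖ / 2)
  have hcomm : a * b - b * a = d * b - b * d := by
    simp only [d, sub_mul, mul_sub, Algebra.commutes]
    abel
  have hd : ‖d‖ ≤ ‖a‖ / 2 := norm_sub_algebraMap_half_norm_le ha
  calc ‖a * b - b * a‖ ≤ ‖d * b‖ + ‖b * d‖ := hcomm ▸ norm_sub_le _ _
    _ ≤ ‖d‖ * ‖b‖ + ‖b‖ * ‖d‖ := add_le_add (norm_mul_le _ _) (norm_mul_le _ _)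
    _ ≤ ‖a‖ / 2 * ‖b‖ + ‖b‖ * (‖a‖ / 2) := by gcongr
    _ = ‖a‖ * ‖b‖ := by ring

end CStarAlgebra

section RealImaginaryPart

open Complex ComplexStarModule

variable {A : Type*} [Ring A] [StarRing A] [Algebra ℂ A] [StarModule ℂ A]

theorem star_mul_self_sub_self_mul_star_eq (a : A) :
    star a * a - a * star a = (2 * I) • ((ℜ a : A) * ℑ a - ℑ a * ℜ a) := by
  have hstar : star a = (ℜ a : A) - I • (ℑ a : A) := by
    conv_lhs => rw [← realPart_add_I_smul_imaginaryPart a]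
    rw [star_add, star_smul, (ℜ a).2.star_eq, (ℑ a).2.star_eq]
    simp [sub_eq_add_neg]
  have ha := (realPart_add_I_smul_imaginaryPart a).symm
  generalize (ℜ a : A) = x at ha hstar ⊢
  generalize (ℑ a : A) = y at ha hstar ⊢
  rw [hstar, ha]
  simp only [add_mul, mul_add, sub_mul, mul_sub, smul_mul_assoc, mul_smul_comm]
  module

end RealImaginaryPart

section Operators

open ContinuousLinearMap ComplexStarModule

variable {H : Type*} [NormedAddCommGroup H] [InnerProductSpace ℂ H] [CompleteSpace H]

theorem reOp_eq_realPart (S : H →L[ℂ] H) : reOp S = ℜ S := by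
  rw [reOp, realPart_apply_coe, star_eq_adjoint]
  match_scalars <;> norm_num

theorem imOp_eq_imaginaryPart (S : H →L[ℂ] H) : imOp S = ℑ S := by
  rw [imOp, imaginaryPart_apply_coe, star_eq_adjoint]
  match_scalars <;> rw [mul_inv, Complex.inv_I] <;> ring

theorem norm_reOp_mul_imOp_sub_le {S : H →L[ℂ] H}
    (hS : (reOp S).IsPositive ∨ (imOp S).IsPositive) :
    ‖reOp S * imOp S - imOp S * reOp S‖ ≤ ‖reOp S‖ * ‖imOp S‖ := by
  rcases hS with hre | him
  · exact CStarAlgebra.norm_mul_sub_mul_le_of_nonneg ((nonneg_iff_isPositive _).2 hre) _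
  · rw [← norm_neg, neg_sub, mul_comm ‖reOp S‖]
    exact CStarAlgebra.norm_mul_sub_mul_le_of_nonneg ((nonneg_iff_isPositive _).2 him) _

end Operators

theorem stmt_17 {H : Type*} [NormedAddCommGroup H] [InnerProductSpace ℂ H] [CompleteSpace H]
    (S : H →L[ℂ] H) (hS : (reOp S).IsPositive ∨ (imOp S).IsPositive) :
    ‖S‖ ^ 2 - ‖S ^ 2‖ ≤ 2 * ‖reOp S‖ * ‖imOp S‖ := by
  calc ‖S‖ ^ 2 - ‖S ^ 2‖ ≤ ‖star S * S - S * star S‖ :=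
        CStarRing.norm_sq_sub_norm_pow_two_le_norm_star_mul_self_sub_self_mul_star S
    _ = 2 * ‖reOp S * imOp S - imOp S * reOp S‖ := by
        rw [star_mul_self_sub_self_mul_star_eq, norm_smul, reOp_eq_realPart,
          imOp_eq_imaginaryPart]
        norm_num
    _ ≤ 2 * ‖reOp S‖ * ‖imOp S‖ := by linarith [norm_reOp_mul_imOp_sub_le hS]
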